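/- arXiv:2502.02461 — 6 statements merged into one kernel-verified Lean document; each statement's English description precedes it below -/
import Mathlib

section
/- Fine's theorem for the two-setting two-outcome Bell scenario: let P(a,b|x,y) for a,b,x,y ∈ {0,1} be a family of probability distributions (i.e., P(·,·|x,y) is a probability distribution on {0,1}^2 for each (x,y)). Then the following are equivalent: (1) there exist a finite set Λ, a probability distribution μ on Λ, and response functions p_A : {0,1}×{0,1}×Λ → [0,1], p_B : {0,1}×{0,1}×Λ → [0,1] with Σ_a p_A(a|x,λ)=1 and Σ_b p_B(b|y,λ)=1 for all x,y,λ, such that P(a,b|x,y) = Σ_{λ∈Λ} μ(λ)·p_A(a|x,λ)·p_B(b|y,λ) for all a,b,x,y; (2) there exists a probability distribution q on {0,1}^4 with coordinates (a₀,a₁,b₀,b₁) such that for all x,y ∈ {0,1} and all a,b ∈ {0,1}, P(a,b|x,y) equals the marginal probability q(a_x = a, b_y = b). -/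
/-!
A local model `(μ, p_A, p_B)` yields the joint distribution
`q(s, t) = ∑_λ μ(λ) ∏_x p_A(s x | x, λ) ∏_y p_B(t y | y, λ)` on outcome assignments: its
`(x, y)`-marginal is `P` because every kernel for an unobserved setting sums to one.
Conversely, a joint distribution `q` is itself a local model whose hidden variable is the
assignment `(s, t)`, with deterministic responses `s x` and `t y`.
-/

open Finset

section Kernels

variable {ι α R : Type*} [Fintype ι] [DecidableEq ι] [Fintype α] [CommSemiring R]
  {p : ι → α → R}

theorem sum_pi_prod_eq_one (hp : ∀ i, ∑ a, p i a = 1) : ∑ s : ι → α, ∏ i, p i (s i) = 1 := by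
  rw [← Fintype.prod_sum]
  simp [hp]

theorem sum_pi_ite_apply_prod [DecidableEq α] (hp : ∀ i, ∑ a, p i a = 1) (i : ι) (a : α) :
    ∑ s : ι → α, (if s i = a then ∏ j, p j (s j) else 0) = p i a := by
  -- Cutting the `i`-th kernel down to the outcome `a` turns the indicator into a product.
  let p' : ι → α → R := fun j b => if j = i ∧ b ≠ a then 0 else p j b
  have hp' : ∀ s : ι → α, (if s i = a then ∏ j, p j (s j) else 0) = ∏ j, p' j (s j) := by
    intro s
    split_ifs with h
    · exact prod_congr rfl fun j _ => by grind
    · exact (prod_eq_zero (mem_univ i) (by grind)).symm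
  have hsum : ∀ j, ∑ b, p' j b = if j = i then p i a else 1 := by
    intro j
    split_ifs with h
    · subst h; simp [p', sum_ite_eq']
    · simp [p', h, hp]
  simp_rw [hp', ← Fintype.prod_sum, hsum, prod_ite_eq']
  simp

theorem sum_sum_sum_mul_mul {β Λ : Type*} [Fintype β] [Fintype Λ] (μ : Λ → R)
    (F : Λ → α → R) (G : Λ → β → R) :
    ∑ s, ∑ t, ∑ l, μ l * (F l s * G l t) = ∑ l, μ l * ((∑ s, F l s) * ∑ t, G l t) := by
  simp_rw [Fintype.sum_mul_sum, mul_sum, sum_comm (γ := Λ)]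

end Kernels

theorem sum_fin_two_arrow {α M : Type*} [Fintype α] [AddCommMonoid M] (f : (Fin 2 → α) → M) :
    ∑ s, f s = ∑ a₀, ∑ a₁, f ![a₀, a₁] := by
  rw [← (finTwoArrowEquiv α).symm.sum_comp, Fintype.sum_prod_type]
  rfl

namespace Bell

variable {X Y A B Λ : Type*} [Fintype A] [Fintype B] [Fintype Λ]

def IsLocalModel (P : A → B → X → Y → ℝ) (μ : Λ → ℝ) (pA : A → X → Λ → ℝ)
    (pB : B → Y → Λ → ℝ) : Prop :=
  (∀ l, 0 ≤ μ l) ∧ (∑ l, μ l) = 1 ∧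
    (∀ a x l, 0 ≤ pA a x l ∧ pA a x l ≤ 1) ∧
    (∀ b y l, 0 ≤ pB b y l ∧ pB b y l ≤ 1) ∧
    (∀ x l, ∑ a, pA a x l = 1) ∧
    (∀ y l, ∑ b, pB b y l = 1) ∧
    (∀ a b x y, P a b x y = ∑ l, μ l * pA a x l * pB b y l)

theorem IsLocalModel.comp_equiv {Λ' : Type*} [Fintype Λ'] {P : A → B → X → Y → ℝ} {μ : Λ → ℝ}
    {pA : A → X → Λ → ℝ} {pB : B → Y → Λ → ℝ} (h : IsLocalModel P μ pA pB) (e : Λ' ≃ Λ) :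
    IsLocalModel P (μ ∘ e) (fun a x l => pA a x (e l)) (fun b y l => pB b y (e l)) := by
  obtain ⟨hμ, hμ1, hA, hB, hA1, hB1, hP⟩ := h
  refine ⟨fun l => hμ _, ?_, fun a x l => hA a x _, fun b y l => hB b y _, fun x l => hA1 x _,
    fun y l => hB1 y _, fun a b x y => ?_⟩
  · rwa [Function.comp_def, e.sum_comp μ]
  · rw [hP, ← e.sum_comp]
    rfl

variable [Fintype X] [Fintype Y] [DecidableEq X] [DecidableEq Y] [DecidableEq A] [DecidableEq B]

/-- `q s t` is the probability that Alice's outcomes for all her settings are `s` and Bob's are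
`t`; in the two-setting case, `s = ![a₀, a₁]` and `t = ![b₀, b₁]`. -/
def IsJointDistribution (P : A → B → X → Y → ℝ) (q : (X → A) → (Y → B) → ℝ) : Prop :=
  (∀ s t, 0 ≤ q s t) ∧ (∑ s, ∑ t, q s t) = 1 ∧
    ∀ x y a b, P a b x y = ∑ s, ∑ t, if s x = a ∧ t y = b then q s t else 0

theorem IsLocalModel.isJointDistribution {P : A → B → X → Y → ℝ} {μ : Λ → ℝ}
    {pA : A → X → Λ → ℝ} {pB : B → Y → Λ → ℝ} (h : IsLocalModel P μ pA pB) :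
    IsJointDistribution P fun s t => ∑ l, μ l * ((∏ i, pA (s i) i l) * ∏ j, pB (t j) j l) := by
  obtain ⟨hμ, hμ1, hA, hB, hA1, hB1, hP⟩ := h
  refine ⟨fun s t => sum_nonneg fun l _ => ?_, ?_, fun x y a b => ?_⟩
  · exact mul_nonneg (hμ l) (mul_nonneg (prod_nonneg fun i _ => (hA (s i) i l).1)
      (prod_nonneg fun j _ => (hB (t j) j l).1))
  · rw [sum_sum_sum_mul_mul]
    simp_rw [sum_pi_prod_eq_one (hA1 · _), sum_pi_prod_eq_one (hB1 · _), mul_one, hμ1]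
  · have hsplit : ∀ (s : X → A) (t : Y → B),
        (if s x = a ∧ t y = b then
          ∑ l, μ l * ((∏ i, pA (s i) i l) * ∏ j, pB (t j) j l) else 0) =
        ∑ l, μ l * ((if s x = a then ∏ i, pA (s i) i l else 0) *
          if t y = b then ∏ j, pB (t j) j l else 0) := by
      intro s t
      by_cases hx : s x = a <;> by_cases hy : t y = b <;> simp [hx, hy]
    simp_rw [hP, hsplit, sum_sum_sum_mul_mul, sum_pi_ite_apply_prod (hA1 · _),
      sum_pi_ite_apply_prod (hB1 · _), mul_assoc]

theorem IsJointDistribution.isLocalModel {P : A → B → X → Y → ℝ} {q : (X → A) → (Y → B) → ℝ}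
    (h : IsJointDistribution P q) :
    IsLocalModel P (fun st : (X → A) × (Y → B) => q st.1 st.2)
      (fun a x st => if st.1 x = a then 1 else 0) (fun b y st => if st.2 y = b then 1 else 0) := by
  obtain ⟨hq, hq1, hP⟩ := h
  refine ⟨fun st => hq _ _, by rwa [Fintype.sum_prod_type], fun a x st => ?_, fun b y st => ?_,
    fun x st => ?_, fun y st => ?_, fun a b x y => ?_⟩
  · dsimp only; split_ifs <;> norm_num
  · dsimp only; split_ifs <;> norm_num
  · simp
  · simp
  · rw [hP, Fintype.sum_prod_type]
    refine sum_congr rfl fun s _ => sum_congr rfl fun t _ => ?_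
    rw [mul_assoc, ite_zero_mul_ite_zero, one_mul, mul_ite_zero, mul_one]

theorem exists_isLocalModel_fin_iff (P : A → B → X → Y → ℝ) :
    (∃ (n : ℕ) (μ : Fin n → ℝ) (pA : A → X → Fin n → ℝ) (pB : B → Y → Fin n → ℝ),
      IsLocalModel P μ pA pB) ↔ ∃ q, IsJointDistribution P q :=
  ⟨fun ⟨_, _, _, _, h⟩ => ⟨_, h.isJointDistribution⟩,
    fun ⟨_, h⟩ => ⟨_, _, _, _, h.isLocalModel.comp_equiv (Fintype.equivFin _).symm⟩⟩

end Bell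

theorem fine_theorem_general
    (P : Fin 2 → Fin 2 → Fin 2 → Fin 2 → ℝ) :  -- `P a b x y` = P(a,b|x,y)
    (∃ (n : ℕ) (μ : Fin n → ℝ) (pA pB : Fin 2 → Fin 2 → Fin n → ℝ),
        (∀ l, 0 ≤ μ l) ∧ (∑ l : Fin n, μ l) = 1 ∧
        (∀ a x l, 0 ≤ pA a x l ∧ pA a x l ≤ 1) ∧
        (∀ b y l, 0 ≤ pB b y l ∧ pB b y l ≤ 1) ∧
        (∀ x l, ∑ a : Fin 2, pA a x l = 1) ∧
        (∀ y l, ∑ b : Fin 2, pB b y l = 1) ∧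
        (∀ a b x y, P a b x y = ∑ l : Fin n, μ l * pA a x l * pB b y l))
    ↔
    (∃ q : Fin 2 → Fin 2 → Fin 2 → Fin 2 → ℝ,  -- `q a₀ a₁ b₀ b₁`
        (∀ a₀ a₁ b₀ b₁, 0 ≤ q a₀ a₁ b₀ b₁) ∧
        (∑ a₀ : Fin 2, ∑ a₁ : Fin 2, ∑ b₀ : Fin 2, ∑ b₁ : Fin 2, q a₀ a₁ b₀ b₁) = 1 ∧
        (∀ x y a b, P a b x y =
          ∑ a₀ : Fin 2, ∑ a₁ : Fin 2, ∑ b₀ : Fin 2, ∑ b₁ : Fin 2,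
            if ![a₀, a₁] x = a ∧ ![b₀, b₁] y = b then q a₀ a₁ b₀ b₁ else 0)) := by
  refine (Bell.exists_isLocalModel_fin_iff P).trans ⟨?_, ?_⟩
  · rintro ⟨Q, hQ0, hQ1, hQ⟩
    refine ⟨fun a₀ a₁ b₀ b₁ => Q ![a₀, a₁] ![b₀, b₁], fun _ _ _ _ => hQ0 _ _, ?_,
      fun x y a b => ?_⟩
    · simpa only [sum_fin_two_arrow] using hQ1
    · simpa only [sum_fin_two_arrow] using hQ x y a b
  · rintro ⟨q, hq0, hq1, hq⟩
    refine ⟨fun s t => q (s 0) (s 1) (t 0) (t 1), fun s t => hq0 _ _ _ _, ?_, fun x y a b => ?_⟩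
    · simpa [sum_fin_two_arrow] using hq1
    · simpa [sum_fin_two_arrow] using hq x y a b

/-- Fine's theorem for the two-setting two-outcome Bell scenario: a family of
correlations `P a b x y` admits a locally causal (local hidden variable) model
iff there is a joint distribution `q` on `{0,1}^4` with coordinates
`(a₀, a₁, b₀, b₁)` whose marginals `q(a_x = a, b_y = b)` reproduce `P`. -/
theorem fine_theorem
    (P : Fin 2 → Fin 2 → Fin 2 → Fin 2 → ℝ)  -- `P a b x y` = P(a,b|x,y)
    (hP0 : ∀ a b x y, 0 ≤ P a b x y)
    (hP1 : ∀ x y, ∑ a : Fin 2, ∑ b : Fin 2, P a b x y = 1) :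
    (∃ (n : ℕ) (μ : Fin n → ℝ) (pA pB : Fin 2 → Fin 2 → Fin n → ℝ),
        (∀ l, 0 ≤ μ l) ∧ (∑ l : Fin n, μ l) = 1 ∧
        (∀ a x l, 0 ≤ pA a x l ∧ pA a x l ≤ 1) ∧
        (∀ b y l, 0 ≤ pB b y l ∧ pB b y l ≤ 1) ∧
        (∀ x l, ∑ a : Fin 2, pA a x l = 1) ∧
        (∀ y l, ∑ b : Fin 2, pB b y l = 1) ∧
        (∀ a b x y, P a b x y = ∑ l : Fin n, μ l * pA a x l * pB b y l))
    ↔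
    (∃ q : Fin 2 → Fin 2 → Fin 2 → Fin 2 → ℝ,  -- `q a₀ a₁ b₀ b₁`
        (∀ a₀ a₁ b₀ b₁, 0 ≤ q a₀ a₁ b₀ b₁) ∧
        (∑ a₀ : Fin 2, ∑ a₁ : Fin 2, ∑ b₀ : Fin 2, ∑ b₁ : Fin 2, q a₀ a₁ b₀ b₁) = 1 ∧
        (∀ x y a b, P a b x y =
          ∑ a₀ : Fin 2, ∑ a₁ : Fin 2, ∑ b₀ : Fin 2, ∑ b₁ : Fin 2,
            if ![a₀, a₁] x = a ∧ ![b₀, b₁] y = b then q a₀ a₁ b₀ b₁ else 0)) :=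
  fine_theorem_general P
end

section
/- There is no probability distribution q on {0,1}^4 with coordinates labelled (a,b,c,d) whose correlators satisfy E_q(a,b) = 1/√2, E_q(a,d) = 1/√2, E_q(c,b) = 1/√2 and E_q(c,d) = −1/√2. -/
/-- The sign `(-1)^u` associated to an outcome `u ∈ {0,1}`. -/
noncomputable def sgn (u : Fin 2) : ℝ := (-1 : ℝ) ^ (u : ℕ)

/-- Correlator of the coordinates `a` and `b` of a distribution `q` on `{0,1}^4`
with coordinates `(a, b, c, d)`. -/
noncomputable def Eab (q : Fin 2 → Fin 2 → Fin 2 → Fin 2 → ℝ) : ℝ :=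
  ∑ a : Fin 2, ∑ b : Fin 2, ∑ c : Fin 2, ∑ d : Fin 2, q a b c d * sgn a * sgn b

/-- Correlator of the coordinates `a` and `d`. -/
noncomputable def Ead (q : Fin 2 → Fin 2 → Fin 2 → Fin 2 → ℝ) : ℝ :=
  ∑ a : Fin 2, ∑ b : Fin 2, ∑ c : Fin 2, ∑ d : Fin 2, q a b c d * sgn a * sgn d

/-- Correlator of the coordinates `c` and `b`. -/
noncomputable def Ecb (q : Fin 2 → Fin 2 → Fin 2 → Fin 2 → ℝ) : ℝ :=
  ∑ a : Fin 2, ∑ b : Fin 2, ∑ c : Fin 2, ∑ d : Fin 2, q a b c d * sgn c * sgn b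

/-- Correlator of the coordinates `c` and `d`. -/
noncomputable def Ecd (q : Fin 2 → Fin 2 → Fin 2 → Fin 2 → ℝ) : ℝ :=
  ∑ a : Fin 2, ∑ b : Fin 2, ∑ c : Fin 2, ∑ d : Fin 2, q a b c d * sgn c * sgn d

/-- No probability distribution on `{0,1}^4` has correlators
`E(a,b) = E(a,d) = E(c,b) = 1/√2` and `E(c,d) = −1/√2` (the quantum
correlations of the Operational Friendliness scenario). -/
theorem no_joint_distribution_for_OF_correlations :
    ¬ ∃ q : Fin 2 → Fin 2 → Fin 2 → Fin 2 → ℝ,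
        (∀ a b c d, 0 ≤ q a b c d) ∧
        (∑ a : Fin 2, ∑ b : Fin 2, ∑ c : Fin 2, ∑ d : Fin 2, q a b c d = 1) ∧
        Eab q = 1 / Real.sqrt 2 ∧
        Ead q = 1 / Real.sqrt 2 ∧
        Ecb q = 1 / Real.sqrt 2 ∧
        Ecd q = -(1 / Real.sqrt 2) := by
  rintro ⟨q, hpos, hsum, h1, h2, h3, h4⟩
  have hs : Real.sqrt 2 < 2 := by
    nlinarith [Real.sq_sqrt (by norm_num : (0:ℝ) ≤ 2), Real.sqrt_nonneg 2]
  have hs0 : (0:ℝ) < Real.sqrt 2 := Real.sqrt_pos.mpr (by norm_num)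
  have key : (2:ℝ) < 4 * (1 / Real.sqrt 2) := by
    rw [mul_one_div, lt_div_iff₀ hs0]; nlinarith
  simp only [Eab, Ead, Ecb, Ecd, sgn, Fin.sum_univ_two, Fin.val_zero, Fin.val_one,
    pow_zero, pow_one] at h1 h2 h3 h4 hsum
  have h := hpos 0 0 0 0
  have h01 := hpos 0 0 0 1
  have h02 := hpos 0 0 1 0
  have h03 := hpos 0 0 1 1
  have h04 := hpos 0 1 0 0
  have h05 := hpos 0 1 0 1
  have h06 := hpos 0 1 1 0
  have h07 := hpos 0 1 1 1
  have h08 := hpos 1 0 0 0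
  have h09 := hpos 1 0 0 1
  have h10 := hpos 1 0 1 0
  have h11 := hpos 1 0 1 1
  have h12 := hpos 1 1 0 0
  have h13 := hpos 1 1 0 1
  have h14 := hpos 1 1 1 0
  have h15 := hpos 1 1 1 1
  linarith
end

section
/- There is no probability distribution q on {0,1}^4 with coordinates labelled (a,b,c,d) whose correlators satisfy E_q(a,b) = 1/√2, E_q(a,d) = −1/√2, E_q(c,b) = −1/√2 and E_q(c,d) = −1/√2. -/
/-!
A joint distribution of the four outcomes is a local hidden-variable model, so its
correlators obey the CHSH inequality `E(a,b) - E(a,d) - E(c,b) - E(c,d) ≤ 2`: pointwise,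
`a (b - d) - c (b + d) ≤ |b - d| + |b + d| = 2` for signs `a, b, c, d`, and averaging keeps
the bound. The prescribed correlators give `4/√2 = 2√2 > 2` instead (Tsirelson's bound).
-/

theorem chsh_le_two {x y z w : ℝ} (hx : |x| ≤ 1) (hy : |y| ≤ 1) (hz : |z| ≤ 1)
    (hw : |w| ≤ 1) : x * y - x * w - z * y - z * w ≤ 2 := by
  have hx_term : x * (y - w) ≤ |y - w| :=
    (le_abs_self _).trans (by rw [abs_mul]; exact mul_le_of_le_one_left (abs_nonneg _) hx)
  have hz_term : -(z * (y + w)) ≤ |y + w| :=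
    (neg_le_abs _).trans (by rw [abs_mul]; exact mul_le_of_le_one_left (abs_nonneg _) hz)
  have hyw : |y - w| + |y + w| ≤ 2 := by
    rw [abs_le] at hy hw
    rcases abs_cases (y - w) with ⟨h₁, -⟩ | ⟨h₁, -⟩ <;>
      rcases abs_cases (y + w) with ⟨h₂, -⟩ | ⟨h₂, -⟩ <;> linarith
  linarith

theorem abs_sgn_le_one (u : Fin 2) : |sgn u| ≤ 1 := by
  simp [sgn]

theorem chsh_combination_eq_sum (q : Fin 2 → Fin 2 → Fin 2 → Fin 2 → ℝ) :
    Eab q - Ead q - Ecb q - Ecd q =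
      ∑ a : Fin 2, ∑ b : Fin 2, ∑ c : Fin 2, ∑ d : Fin 2,
        q a b c d * (sgn a * sgn b - sgn a * sgn d - sgn c * sgn b - sgn c * sgn d) := by
  simp only [Eab, Ead, Ecb, Ecd, ← Finset.sum_sub_distrib]
  ring_nf

theorem chsh_combination_le_two {q : Fin 2 → Fin 2 → Fin 2 → Fin 2 → ℝ}
    (hq : ∀ a b c d, 0 ≤ q a b c d)
    (hsum : ∑ a : Fin 2, ∑ b : Fin 2, ∑ c : Fin 2, ∑ d : Fin 2, q a b c d = 1) :
    Eab q - Ead q - Ecb q - Ecd q ≤ 2 := by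
  calc Eab q - Ead q - Ecb q - Ecd q
      ≤ ∑ a : Fin 2, ∑ b : Fin 2, ∑ c : Fin 2, ∑ d : Fin 2, q a b c d * 2 := by
        rw [chsh_combination_eq_sum]
        gcongr with a _ b _ c _ d _
        · exact hq a b c d
        · exact chsh_le_two (abs_sgn_le_one a) (abs_sgn_le_one b) (abs_sgn_le_one c)
            (abs_sgn_le_one d)
    _ = 2 := by simp only [← Finset.sum_mul, hsum, one_mul]

/-- No probability distribution on `{0,1}^4` has correlators
`E(a,b) = 1/√2` and `E(a,d) = E(c,b) = E(c,d) = −1/√2` (the singlet-state quantum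
correlations of the Local Friendliness scenario). -/
theorem no_joint_distribution_for_LF_correlations :
    ¬ ∃ q : Fin 2 → Fin 2 → Fin 2 → Fin 2 → ℝ,
        (∀ a b c d, 0 ≤ q a b c d) ∧
        (∑ a : Fin 2, ∑ b : Fin 2, ∑ c : Fin 2, ∑ d : Fin 2, q a b c d = 1) ∧
        Eab q = 1 / Real.sqrt 2 ∧
        Ead q = -(1 / Real.sqrt 2) ∧
        Ecb q = -(1 / Real.sqrt 2) ∧
        Ecd q = -(1 / Real.sqrt 2) := by
  rintro ⟨q, hq, hsum, hab, had, hcb, hcd⟩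
  have hchsh := chsh_combination_le_two hq hsum
  rw [hab, had, hcb, hcd] at hchsh
  have hsqrt : 1 < Real.sqrt 2 := by
    rw [Real.lt_sqrt zero_le_one]; norm_num
  have hcombination : 1 / Real.sqrt 2 - -(1 / Real.sqrt 2) - -(1 / Real.sqrt 2) - -(1 / Real.sqrt 2)
      = 2 * Real.sqrt 2 := by
    field_simp; rw [Real.sq_sqrt zero_le_two]; ring
  linarith
end

section
/- Operational Friendliness no-go theorem (mathematical core): there is no family of probability distributions p(·|x,y) on {0,1}^4 with coordinates (a,b,c,d), indexed by (x,y) ∈ {0,1}×{0,1}, satisfying all of: (i) the (c,d)-marginal of p(·|x,y) does not depend on y; (ii) the c-marginal of p(·|x,y) does not depend on (x,y); (iii) for every y and every value of c having positive c-marginal probability, the conditional distribution of d given c under p(·|x,y) does not depend on x; (iv) for every y and every value of c having positive c-marginal probability, the conditional distribution of b given c under p(·|x,y) does not depend on x; (v) the (a,d)-marginal of p(·|x,y) does not depend on y; together with the empirical correlator values E_{p(·|0,0)}(c,d) = −1/√2, E_{p(·|0,1)}(c,b) = 1/√2, E_{p(·|1,0)}(a,d) = 1/√2, and E_{p(·|1,1)}(a,b)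 = 1/√2. -/
/-- The `(c,d)`-marginal. -/
noncomputable def margCD (q : Fin 2 → Fin 2 → Fin 2 → Fin 2 → ℝ) (c d : Fin 2) : ℝ :=
  ∑ a : Fin 2, ∑ b : Fin 2, q a b c d

/-- The `c`-marginal. -/
noncomputable def margC (q : Fin 2 → Fin 2 → Fin 2 → Fin 2 → ℝ) (c : Fin 2) : ℝ :=
  ∑ a : Fin 2, ∑ b : Fin 2, ∑ d : Fin 2, q a b c d

/-- The `(c,b)`-marginal. -/
noncomputable def margCB (q : Fin 2 → Fin 2 → Fin 2 → Fin 2 → ℝ) (c b : Fin 2) : ℝ :=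
  ∑ a : Fin 2, ∑ d : Fin 2, q a b c d

/-- The `(a,d)`-marginal. -/
noncomputable def margAD (q : Fin 2 → Fin 2 → Fin 2 → Fin 2 → ℝ) (a d : Fin 2) : ℝ :=
  ∑ b : Fin 2, ∑ c : Fin 2, q a b c d

/-!
A marginal equals its conditional times the c-marginal, so (ii)–(iv) make the `(c,d)`- and
`(c,b)`-marginals independent of `x` (when the c-marginal vanishes, nonnegativity forces both
sides to vanish). With (i) and (v), all four correlators of the protocol are then correlators of
the single distribution `p(·|1,1)`, so they obey the CHSH inequality `≤ 2`, whereas the quantum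
values give `4/√2 = 2√2`.
-/

open Finset

lemma eq_of_sum_eq_of_div_sum_eq {ι : Type*} [Fintype ι] {f g : ι → ℝ}
    (hf : 0 ≤ f) (hg : 0 ≤ g) (hsum : ∑ i, f i = ∑ i, g i)
    (hdiv : 0 < ∑ i, f i → ∀ i, f i / ∑ j, f j = g i / ∑ j, g j) : f = g := by
  rcases (sum_nonneg fun i _ => hf i).lt_or_eq with hpos | hzero
  · funext i
    have h := hdiv hpos i
    rwa [← hsum, div_left_inj' hpos.ne'] at h
  · have hg0 : ∑ i, g i = 0 := hsum ▸ hzero.symm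
    rw [eq_comm, sum_eq_zero_iff_of_nonneg fun i _ => hf i] at hzero
    rw [sum_eq_zero_iff_of_nonneg fun i _ => hg i] at hg0
    funext i
    rw [hzero i (mem_univ i), hg0 i (mem_univ i)]

section Marginals

variable (q : Fin 2 → Fin 2 → Fin 2 → Fin 2 → ℝ)

lemma margCD_nonneg (hq : ∀ a b c d, 0 ≤ q a b c d) (c : Fin 2) : 0 ≤ margCD q c :=
  fun d => sum_nonneg fun a _ => sum_nonneg fun b _ => hq a b c d

lemma margCB_nonneg (hq : ∀ a b c d, 0 ≤ q a b c d) (c : Fin 2) : 0 ≤ margCB q c :=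
  fun b => sum_nonneg fun a _ => sum_nonneg fun d _ => hq a b c d

lemma margC_eq_sum_margCD (c : Fin 2) : margC q c = ∑ d, margCD q c d := by
  simp only [margC, margCD, Fin.sum_univ_two]; ring

lemma margC_eq_sum_margCB (c : Fin 2) : margC q c = ∑ b, margCB q c b := by
  simp only [margC, margCB, Fin.sum_univ_two]; ring

lemma Ecd_eq_sum_margCD : Ecd q = ∑ c, ∑ d, margCD q c d * sgn c * sgn d := by
  simp only [Ecd, margCD, Fin.sum_univ_two]; ring

lemma Ecb_eq_sum_margCB : Ecb q = ∑ c, ∑ b, margCB q c b * sgn c * sgn b := by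
  simp only [Ecb, margCB, Fin.sum_univ_two]; ring

lemma Ead_eq_sum_margAD : Ead q = ∑ a, ∑ d, margAD q a d * sgn a * sgn d := by
  simp only [Ead, margAD, Fin.sum_univ_two]; ring

variable {q} {q' : Fin 2 → Fin 2 → Fin 2 → Fin 2 → ℝ}

lemma Ecd_eq_of_margCD_eq (h : margCD q = margCD q') : Ecd q = Ecd q' := by
  rw [Ecd_eq_sum_margCD, h, ← Ecd_eq_sum_margCD]

lemma Ecb_eq_of_margCB_eq (h : margCB q = margCB q') : Ecb q = Ecb q' := by
  rw [Ecb_eq_sum_margCB, h, ← Ecb_eq_sum_margCB]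

lemma Ead_eq_of_margAD_eq (h : margAD q = margAD q') : Ead q = Ead q' := by
  rw [Ead_eq_sum_margAD, h, ← Ead_eq_sum_margAD]

end Marginals

section SameConditionals

variable {q q' : Fin 2 → Fin 2 → Fin 2 → Fin 2 → ℝ}
  (hq : ∀ a b c d, 0 ≤ q a b c d) (hq' : ∀ a b c d, 0 ≤ q' a b c d)
  (hC : ∀ c, margC q c = margC q' c)
include hq hq' hC

lemma margCD_eq_of_cond_eq
    (hcond : ∀ c, 0 < margC q c →
      ∀ d, margCD q c d / margC q c = margCD q' c d / margC q' c) :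
    margCD q = margCD q' := by
  funext c
  refine eq_of_sum_eq_of_div_sum_eq (margCD_nonneg q hq c) (margCD_nonneg q' hq' c) ?_ ?_
  · rw [← margC_eq_sum_margCD, ← margC_eq_sum_margCD, hC]
  · rw [← margC_eq_sum_margCD, ← margC_eq_sum_margCD]
    exact hcond c

lemma margCB_eq_of_cond_eq
    (hcond : ∀ c, 0 < margC q c →
      ∀ b, margCB q c b / margC q c = margCB q' c b / margC q' c) :
    margCB q = margCB q' := by
  funext c
  refine eq_of_sum_eq_of_div_sum_eq (margCB_nonneg q hq c) (margCB_nonneg q' hq' c) ?_ ?_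
  · rw [← margC_eq_sum_margCB, ← margC_eq_sum_margCB, hC]
  · rw [← margC_eq_sum_margCB, ← margC_eq_sum_margCB]
    exact hcond c

end SameConditionals

lemma sgn_chsh_le_two (a b c d : Fin 2) :
    sgn a * sgn b + sgn a * sgn d + sgn c * sgn b - sgn c * sgn d ≤ 2 := by
  fin_cases a <;> fin_cases b <;> fin_cases c <;> fin_cases d <;>
    norm_num [sgn]

lemma chsh_le_two_s5 (q : Fin 2 → Fin 2 → Fin 2 → Fin 2 → ℝ) (hq : ∀ a b c d, 0 ≤ q a b c d)
    (hsum : ∑ a, ∑ b, ∑ c, ∑ d, q a b c d = 1) :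
    Eab q + Ead q + Ecb q - Ecd q ≤ 2 :=
  calc Eab q + Ead q + Ecb q - Ecd q
      = ∑ a, ∑ b, ∑ c, ∑ d,
          q a b c d * (sgn a * sgn b + sgn a * sgn d + sgn c * sgn b - sgn c * sgn d) := by
        simp only [Eab, Ead, Ecb, Ecd, ← sum_add_distrib, ← sum_sub_distrib]
        refine sum_congr rfl fun a _ => sum_congr rfl fun b _ =>
          sum_congr rfl fun c _ => sum_congr rfl fun d _ => by ring
    _ ≤ ∑ a, ∑ b, ∑ c, ∑ d, q a b c d * 2 := by
        gcongr with a _ b _ c _ d _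
        · exact hq a b c d
        · exact sgn_chsh_le_two a b c d
    _ = 2 := by simp only [← sum_mul, hsum, one_mul]

/-- Operational Friendliness no-go theorem (mathematical core): no family of
distributions `p(·|x,y)` on `{0,1}^4` can satisfy the Operational Agency
conditions (i)–(v) together with the quantum correlator values of the
Operational Friendliness protocol. -/
theorem operational_friendliness_no_go :
    ¬ ∃ p : Fin 2 → Fin 2 → Fin 2 → Fin 2 → Fin 2 → Fin 2 → ℝ,  -- `p x y a b c d`
        (∀ x y a b c d, 0 ≤ p x y a b c d) ∧
        (∀ x y, ∑ a : Fin 2, ∑ b : Fin 2, ∑ c : Fin 2, ∑ d : Fin 2, p x y a b c d = 1) ∧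
        -- (i) the (c,d)-marginal does not depend on y
        (∀ x y y' c d, margCD (p x y) c d = margCD (p x y') c d) ∧
        -- (ii) the c-marginal does not depend on (x,y)
        (∀ x y x' y' c, margC (p x y) c = margC (p x' y') c) ∧
        -- (iii) the conditional distribution of d given c does not depend on x
        (∀ x x' y c, 0 < margC (p x y) c →
          ∀ d, margCD (p x y) c d / margC (p x y) c
              = margCD (p x' y) c d / margC (p x' y) c) ∧
        -- (iv) the conditional distribution of b given c does not depend on x
        (∀ x x' y c, 0 < margC (p x y) c →
          ∀ b, margCB (p x y) c b / margC (p x y) c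
              = margCB (p x' y) c b / margC (p x' y) c) ∧
        -- (v) the (a,d)-marginal does not depend on y
        (∀ x y y' a d, margAD (p x y) a d = margAD (p x y') a d) ∧
        -- empirical quantum correlators
        Ecd (p 0 0) = -(1 / Real.sqrt 2) ∧
        Ecb (p 0 1) = 1 / Real.sqrt 2 ∧
        Ead (p 1 0) = 1 / Real.sqrt 2 ∧
        Eab (p 1 1) = 1 / Real.sqrt 2 := by
  rintro ⟨p, hpos, hsum, hi, hii, hiii, hiv, hv, hcd, hcb, had, hab⟩
  have hCD : margCD (p 1 1) = margCD (p 0 0) := by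
    rw [show margCD (p 1 1) = margCD (p 1 0) from funext₂ (hi 1 1 0)]
    exact margCD_eq_of_cond_eq (hpos 1 0) (hpos 0 0) (hii 1 0 0 0) (hiii 1 0 0)
  have hCB : margCB (p 1 1) = margCB (p 0 1) :=
    margCB_eq_of_cond_eq (hpos 1 1) (hpos 0 1) (hii 1 1 0 1) (hiv 1 0 1)
  have hAD : margAD (p 1 1) = margAD (p 1 0) := funext₂ (hv 1 1 0)
  have hchsh := chsh_le_two_s5 (p 1 1) (hpos 1 1) (hsum 1 1)
  rw [hab, Ead_eq_of_margAD_eq hAD, had, Ecb_eq_of_margCB_eq hCB, hcb,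
    Ecd_eq_of_margCD_eq hCD, hcd, ← Real.sqrt_div_self'] at hchsh
  linarith [Real.one_lt_sqrt_two]
end

section
/- Local Friendliness no-go theorem (mathematical core): there is no family of probability distributions p(·|x,y) on {0,1}^4 with coordinates (a,b,c,d), indexed by (x,y) ∈ {0,1}×{0,1}, satisfying all of: (i) the (c,d)-marginal of p(·|x,y) does not depend on (x,y); (ii) the c-marginal of p(·|x,y) does not depend on (x,y); (iii) for every y and every value of c having positive c-marginal probability, the conditional distribution of b given c under p(·|x,y) does not depend on x; (iv) the (a,d)-marginal of p(·|x,y) does not depend on y; together with the empirical correlator values E_{p(·|0,0)}(c,d) = −1/√2, E_{p(·|0,1)}(c,b) = −1/√2, E_{p(·|1,0)}(a,d) = −1/√2, and E_{p(·|1,1)}(a,b) = 1/√2. -/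
/-- Local Friendliness no-go theorem (mathematical core): no family of
distributions `p(·|x,y)` on `{0,1}^4` can satisfy the Local Agency
conditions (i)–(iv) together with the singlet-state quantum correlator values
of the Local Friendliness protocol. -/
theorem local_friendliness_no_go :
    ¬ ∃ p : Fin 2 → Fin 2 → Fin 2 → Fin 2 → Fin 2 → Fin 2 → ℝ,  -- `p x y a b c d`
        (∀ x y a b c d, 0 ≤ p x y a b c d) ∧
        (∀ x y, ∑ a : Fin 2, ∑ b : Fin 2, ∑ c : Fin 2, ∑ d : Fin 2, p x y a b c d = 1) ∧
        -- (i) the (c,d)-marginal does not depend on (x,y)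
        (∀ x y x' y' c d, margCD (p x y) c d = margCD (p x' y') c d) ∧
        -- (ii) the c-marginal does not depend on (x,y)
        (∀ x y x' y' c, margC (p x y) c = margC (p x' y') c) ∧
        -- (iii) the conditional distribution of b given c does not depend on x
        (∀ x x' y c, 0 < margC (p x y) c →
          ∀ b, margCB (p x y) c b / margC (p x y) c
              = margCB (p x' y) c b / margC (p x' y) c) ∧
        -- (iv) the (a,d)-marginal does not depend on y
        (∀ x y y' a d, margAD (p x y) a d = margAD (p x y') a d) ∧
        -- empirical quantum correlators
        Ecd (p 0 0) = -(1 / Real.sqrt 2) ∧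
        Ecb (p 0 1) = -(1 / Real.sqrt 2) ∧
        Ead (p 1 0) = -(1 / Real.sqrt 2) ∧
        Eab (p 1 1) = 1 / Real.sqrt 2 := by
  rintro ⟨p, hpos, hnorm, hCD, hC, hCB, hAD, e1, e2, e3, e4⟩
  -- Step 1: Ecd depends only on the (c,d)-marginal
  have h1 : Ecd (p 0 0) = Ecd (p 1 1) := by
    have h00 := hCD 0 0 1 1 0 0
    have h01 := hCD 0 0 1 1 0 1
    have h10 := hCD 0 0 1 1 1 0
    have h11 := hCD 0 0 1 1 1 1
    simp only [Ecd, margCD, sgn, Fin.sum_univ_two, Fin.val_zero, Fin.val_one,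
      pow_zero, pow_one] at h00 h01 h10 h11 ⊢
    linarith
  -- Step 2: Ead depends only on the (a,d)-marginal
  have h3 : Ead (p 1 0) = Ead (p 1 1) := by
    have h00 := hAD 1 0 1 0 0
    have h01 := hAD 1 0 1 0 1
    have h10 := hAD 1 0 1 1 0
    have h11 := hAD 1 0 1 1 1
    simp only [Ead, margAD, sgn, Fin.sum_univ_two, Fin.val_zero, Fin.val_one,
      pow_zero, pow_one] at h00 h01 h10 h11 ⊢
    linarith
  -- Step 3: the (c,b)-marginal does not depend on x
  have hCBeq : ∀ c b, margCB (p 0 1) c b = margCB (p 1 1) c b := by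
    intro c b
    have hc := hC 0 1 1 1 c
    by_cases hp : 0 < margC (p 0 1) c
    · have hp' : 0 < margC (p 1 1) c := hc ▸ hp
      have h := hCB 0 1 1 c hp b
      rw [hc] at h
      field_simp [ne_of_gt hp'] at h
      exact h
    · have hge : 0 ≤ margC (p 0 1) c := by
        simp only [margC, Fin.sum_univ_two]
        linarith [hpos 0 1 0 0 c 0, hpos 0 1 0 0 c 1, hpos 0 1 0 1 c 0, hpos 0 1 0 1 c 1,
          hpos 0 1 1 0 c 0, hpos 0 1 1 0 c 1, hpos 0 1 1 1 c 0, hpos 0 1 1 1 c 1]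
      have hz : margC (p 0 1) c = 0 := le_antisymm (not_lt.mp hp) hge
      have hz' : margC (p 1 1) c = 0 := hc ▸ hz
      simp only [margC, Fin.sum_univ_two] at hz hz'
      fin_cases b <;>
        simp only [margCB, Fin.sum_univ_two, Fin.zero_eta, Fin.mk_one, Fin.isValue]
      · linarith [hpos 0 1 0 0 c 0, hpos 0 1 0 0 c 1, hpos 0 1 0 1 c 0, hpos 0 1 0 1 c 1,
          hpos 0 1 1 0 c 0, hpos 0 1 1 0 c 1, hpos 0 1 1 1 c 0, hpos 0 1 1 1 c 1,
          hpos 1 1 0 0 c 0, hpos 1 1 0 0 c 1, hpos 1 1 0 1 c 0, hpos 1 1 0 1 c 1,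
          hpos 1 1 1 0 c 0, hpos 1 1 1 0 c 1, hpos 1 1 1 1 c 0, hpos 1 1 1 1 c 1]
      · linarith [hpos 0 1 0 0 c 0, hpos 0 1 0 0 c 1, hpos 0 1 0 1 c 0, hpos 0 1 0 1 c 1,
          hpos 0 1 1 0 c 0, hpos 0 1 1 0 c 1, hpos 0 1 1 1 c 0, hpos 0 1 1 1 c 1,
          hpos 1 1 0 0 c 0, hpos 1 1 0 0 c 1, hpos 1 1 0 1 c 0, hpos 1 1 0 1 c 1,
          hpos 1 1 1 0 c 0, hpos 1 1 1 0 c 1, hpos 1 1 1 1 c 0, hpos 1 1 1 1 c 1]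
  have h2 : Ecb (p 0 1) = Ecb (p 1 1) := by
    have h00 := hCBeq 0 0
    have h01 := hCBeq 0 1
    have h10 := hCBeq 1 0
    have h11 := hCBeq 1 1
    simp only [Ecb, margCB, sgn, Fin.sum_univ_two, Fin.val_zero, Fin.val_one,
      pow_zero, pow_one] at h00 h01 h10 h11 ⊢
    linarith
  -- Step 4: CHSH inequality for the single distribution p 1 1
  have chsh : -2 ≤ Ecd (p 1 1) + Ecb (p 1 1) + Ead (p 1 1) - Eab (p 1 1) := by
    have hn := hnorm 1 1
    simp only [Fin.sum_univ_two] at hn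
    simp only [Ecd, Ecb, Ead, Eab, sgn, Fin.sum_univ_two, Fin.val_zero, Fin.val_one,
      pow_zero, pow_one]
    linarith [hpos 1 1 0 0 0 0, hpos 1 1 0 0 0 1, hpos 1 1 0 0 1 0, hpos 1 1 0 0 1 1,
      hpos 1 1 0 1 0 0, hpos 1 1 0 1 0 1, hpos 1 1 0 1 1 0, hpos 1 1 0 1 1 1,
      hpos 1 1 1 0 0 0, hpos 1 1 1 0 0 1, hpos 1 1 1 0 1 0, hpos 1 1 1 0 1 1,
      hpos 1 1 1 1 0 0, hpos 1 1 1 1 0 1, hpos 1 1 1 1 1 0, hpos 1 1 1 1 1 1]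
  rw [h1] at e1
  rw [h2] at e2
  rw [h3] at e3
  rw [e1, e2, e3, e4] at chsh
  have hs0 : 0 < Real.sqrt 2 := Real.sqrt_pos.mpr (by norm_num)
  have hs : Real.sqrt 2 ^ 2 = 2 := Real.sq_sqrt (by norm_num)
  have h4 : 4 / Real.sqrt 2 ≤ 2 := by
    have : -(4 / Real.sqrt 2) = -(1 / Real.sqrt 2) + -(1 / Real.sqrt 2) + -(1 / Real.sqrt 2) - 1 / Real.sqrt 2 := by ring
    linarith [chsh, this]
  rw [div_le_iff₀ hs0] at h4
  nlinarith
end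

section
/- Let ψ_θ := (cos(θ/2), sin(θ/2)) ∈ ℂ², let φ₀ := ψ_{3π/4}, φ₁ := ψ_{7π/4} (Charlie's measurement basis), e₀ := (1,0), e₁ := (0,1) (the Z basis), f₀ := (1/√2)(1,1), f₁ := (1/√2)(1,−1) (the X basis), and θ₀ := π/4, θ₁ := 5π/4 (Alice's preparations). Define the distributions on {0,1}²: wp₁(c,d) := Σ_{a∈{0,1}} (1/2)·|⟨φ_c, ψ_{θ_a}⟩|²·|⟨e_d, φ_c⟩|²; wp₂(c,b) := Σ_{a∈{0,1}} (1/2)·|⟨φ_c, ψ_{θ_a}⟩|²·|⟨f_b, φ_c⟩|²; wp₃(a,d) := (1/2)·|⟨e_d, ψ_{θ_a}⟩|²; wp₄(a,b) := (1/2)·|⟨f_b, ψ_{θ_a}⟩|². Then the correlators Σ (−1)^{c+d}·wp₁(c,d) = −1/√2, Σ (−1)^{c+b}·wp₂(c,b) = 1/√2, Σ (−1)^{a+d}·wp₃(a,d) = 1/√2, and Σ (−1)^{a+b}·wp₄(a,b) = 1/√2. -/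
/-- The qubit state `ψ_θ = (cos(θ/2), sin(θ/2))`. -/
noncomputable def psi (θ : ℝ) : Fin 2 → ℂ :=
  ![(Real.cos (θ / 2) : ℂ), (Real.sin (θ / 2) : ℂ)]

/-- The standard Hermitian inner product on `ℂ²` (conjugate-linear in the first slot). -/
noncomputable def qinner (u v : Fin 2 → ℂ) : ℂ := ∑ i : Fin 2, star (u i) * v i

/-- Charlie's measurement basis `φ₀ = ψ_{3π/4}`, `φ₁ = ψ_{7π/4}`. -/
noncomputable def φ : Fin 2 → Fin 2 → ℂ := ![psi (3 * Real.pi / 4), psi (7 * Real.pi / 4)]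

/-- The `Z` basis `e₀ = (1,0)`, `e₁ = (0,1)`. -/
noncomputable def eZ : Fin 2 → Fin 2 → ℂ := ![![1, 0], ![0, 1]]

/-- The `X` basis `f₀ = (1/√2)(1,1)`, `f₁ = (1/√2)(1,−1)`. -/
noncomputable def fX : Fin 2 → Fin 2 → ℂ :=
  ![![((1 / Real.sqrt 2 : ℝ) : ℂ), ((1 / Real.sqrt 2 : ℝ) : ℂ)],
    ![((1 / Real.sqrt 2 : ℝ) : ℂ), ((-(1 / Real.sqrt 2) : ℝ) : ℂ)]]

/-- Alice's preparation angles `θ₀ = π/4`, `θ₁ = 5π/4`. -/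
noncomputable def θA : Fin 2 → ℝ := ![Real.pi / 4, 5 * Real.pi / 4]

/-- Born-rule distribution for `(c,d)` (settings `x = 0`, `y = 0`). -/
noncomputable def wp1 (c d : Fin 2) : ℝ :=
  ∑ a : Fin 2, (1 / 2) * Complex.normSq (qinner (φ c) (psi (θA a)))
    * Complex.normSq (qinner (eZ d) (φ c))

/-- Born-rule distribution for `(c,b)` (settings `x = 0`, `y = 1`). -/
noncomputable def wp2 (c b : Fin 2) : ℝ :=
  ∑ a : Fin 2, (1 / 2) * Complex.normSq (qinner (φ c) (psi (θA a)))
    * Complex.normSq (qinner (fX b) (φ c))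

/-- Born-rule distribution for `(a,d)` (settings `x = 1`, `y = 0`). -/
noncomputable def wp3 (a d : Fin 2) : ℝ :=
  (1 / 2) * Complex.normSq (qinner (eZ d) (psi (θA a)))

/-- Born-rule distribution for `(a,b)` (settings `x = 1`, `y = 1`). -/
noncomputable def wp4 (a b : Fin 2) : ℝ :=
  (1 / 2) * Complex.normSq (qinner (fX b) (psi (θA a)))

/-!
Every vector involved is a real qubit state: `e_d = ψ_{dπ}`, `f_b = ψ_{π/2 - bπ}`,
`φ_c = ψ_{3π/4 + cπ}` and `ψ_{θ_a} = ψ_{π/4 + aπ}`, and for these the Born rule reads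
`|⟨ψ_α, ψ_β⟩|² = (1 + cos (α - β)) / 2`. Charlie's basis is unbiased with respect to Alice's
states (every overlap is `1/2`), so each of the four distributions is
`(1 + (-1)^(u+v) x) / 4`, whose correlator is `x`; here `x = cos γ` for Debbie's `Z` and
`x = sin γ` for Bob's `X` measurement, with `γ = 3π/4` when Charlie's measurement stands and
`γ = π/4` when it is undone.
-/

open Real

noncomputable def correlator (q : Fin 2 → Fin 2 → ℝ) : ℝ :=
  ∑ u : Fin 2, ∑ v : Fin 2, sgn u * sgn v * q u v

noncomputable def signCorrelated (x : ℝ) (u v : Fin 2) : ℝ := (1 + sgn u * sgn v * x) / 4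

lemma correlator_signCorrelated (x : ℝ) : correlator (signCorrelated x) = x := by
  simp only [correlator, signCorrelated, sgn, Fin.sum_univ_two, Fin.val_zero, Fin.val_one,
    pow_zero, pow_one]
  ring

lemma cos_add_mul_pi (γ : ℝ) (u : Fin 2) : cos (γ + u * π) = sgn u * cos γ := by
  fin_cases u <;> simp [sgn, cos_add_pi]

lemma sin_add_mul_pi (γ : ℝ) (u : Fin 2) : sin (γ + u * π) = sgn u * sin γ := by
  fin_cases u <;> simp [sgn, sin_add_pi]

lemma qinner_psi_psi (α β : ℝ) : qinner (psi α) (psi β) = (cos ((α - β) / 2) : ℂ) := by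
  simp only [qinner, psi, Fin.sum_univ_two, Matrix.cons_val_zero, Matrix.cons_val_one,
    Complex.star_def, Complex.conj_ofReal]
  rw [sub_div, cos_sub]
  push_cast
  ring

lemma normSq_qinner_psi_psi (α β : ℝ) :
    Complex.normSq (qinner (psi α) (psi β)) = (1 + cos (α - β)) / 2 := by
  rw [qinner_psi_psi, Complex.normSq_ofReal, ← sq, cos_sq, mul_div_cancel₀ _ two_ne_zero]
  ring

lemma eZ_eq_psi (d : Fin 2) : eZ d = psi (d * π) := by
  fin_cases d <;> ext i <;> fin_cases i <;> simp [eZ, psi]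

lemma fX_eq_psi (b : Fin 2) : fX b = psi (π / 2 - b * π) := by
  fin_cases b <;> ext i <;> fin_cases i <;>
    simp [fX, psi, show π / 2 / 2 = π / 4 by ring, show (π / 2 - π) / 2 = -(π / 4) by ring,
      cos_pi_div_four, sin_pi_div_four, sqrt_div_self']

lemma φ_eq_psi (c : Fin 2) : φ c = psi (3 * π / 4 + c * π) := by
  fin_cases c
  · simp [φ]
  · simp [φ]; ring_nf

lemma θA_eq (a : Fin 2) : θA a = π / 4 + a * π := by
  fin_cases a
  · simp [θA]
  · simp [θA]; ring

lemma normSq_qinner_eZ_psi (d : Fin 2) (α : ℝ) :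
    Complex.normSq (qinner (eZ d) (psi α)) = (1 + sgn d * cos α) / 2 := by
  rw [eZ_eq_psi, normSq_qinner_psi_psi, ← neg_add_eq_sub, cos_add_mul_pi, cos_neg]

lemma normSq_qinner_fX_psi (b : Fin 2) (α : ℝ) :
    Complex.normSq (qinner (fX b) (psi α)) = (1 + sgn b * sin α) / 2 := by
  rw [fX_eq_psi, normSq_qinner_psi_psi, show π / 2 - b * π - α = π / 2 - (α + b * π) by ring,
    cos_pi_div_two_sub, sin_add_mul_pi]

lemma normSq_qinner_φ_psi_θA (c a : Fin 2) :
    Complex.normSq (qinner (φ c) (psi (θA a))) = 1 / 2 := by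
  have h : cos (3 * π / 4 + c * π - (π / 4 + a * π)) = 0 :=
    cos_eq_zero_iff.2 ⟨c - a, by push_cast; ring⟩
  rw [φ_eq_psi, θA_eq, normSq_qinner_psi_psi, h]
  norm_num

lemma wp1_eq : wp1 = signCorrelated (cos (3 * π / 4)) := by
  ext c d
  simp only [wp1, normSq_qinner_φ_psi_θA, Fin.sum_univ_two]
  rw [φ_eq_psi, normSq_qinner_eZ_psi, cos_add_mul_pi, signCorrelated]
  ring

lemma wp2_eq : wp2 = signCorrelated (sin (3 * π / 4)) := by
  ext c b
  simp only [wp2, normSq_qinner_φ_psi_θA, Fin.sum_univ_two]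
  rw [φ_eq_psi, normSq_qinner_fX_psi, sin_add_mul_pi, signCorrelated]
  ring

lemma wp3_eq : wp3 = signCorrelated (cos (π / 4)) := by
  ext a d
  simp only [wp3, signCorrelated, θA_eq, normSq_qinner_eZ_psi, cos_add_mul_pi]
  ring

lemma wp4_eq : wp4 = signCorrelated (sin (π / 4)) := by
  ext a b
  simp only [wp4, signCorrelated, θA_eq, normSq_qinner_fX_psi, sin_add_mul_pi]
  ring

/-- The Born-rule predictions of the Operational Friendliness protocol:
the four empirical correlators equal `−1/√2, 1/√2, 1/√2, 1/√2`. -/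
theorem operational_friendliness_quantum_correlators :
    (∑ c : Fin 2, ∑ d : Fin 2, sgn c * sgn d * wp1 c d = -(1 / Real.sqrt 2)) ∧
    (∑ c : Fin 2, ∑ b : Fin 2, sgn c * sgn b * wp2 c b = 1 / Real.sqrt 2) ∧
    (∑ a : Fin 2, ∑ d : Fin 2, sgn a * sgn d * wp3 a d = 1 / Real.sqrt 2) ∧
    (∑ a : Fin 2, ∑ b : Fin 2, sgn a * sgn b * wp4 a b = 1 / Real.sqrt 2) := by
  have h34 : 3 * π / 4 = π - π / 4 := by ring
  refine ⟨?_, ?_, ?_, ?_⟩ <;> show correlator _ = _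
  · rw [wp1_eq, correlator_signCorrelated, h34, cos_pi_sub, cos_pi_div_four, sqrt_div_self']
  · rw [wp2_eq, correlator_signCorrelated, h34, sin_pi_sub, sin_pi_div_four, sqrt_div_self']
  · rw [wp3_eq, correlator_signCorrelated, cos_pi_div_four, sqrt_div_self']
  · rw [wp4_eq, correlator_signCorrelated, sin_pi_div_four, sqrt_div_self']
end
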